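/- Let χ be a finite signed measure on ℝⁿ with density χ(x), obtained as the difference χ = ρ' - ρ of two probability densities, and let ρ have density with pushforward density Aρ(x) := [f_#ρ](f(x)) well-defined and positive. Then under suitable integrability and differentiability conditions allowing differentiation under the integral, d/dε[ -∫ (ρ + εχ)(x) log A(ρ + εχ)(x) dx ]|_{ε=0} = -∫ χ(x) log Aρ(x) dx. That is, the first variation of the marginal entropy functional H_m at ρ is the function x ↦ -log Aρ(x). -/

import Mathlib

open MeasureTheory ENNReal NNReal

lemma key_integral {α : Type*} [MeasurableSpace α] (vol μ ν : Measure α)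
    [SigmaFinite vol] [IsFiniteMeasure μ] [IsFiniteMeasure ν]
    (hμ : μ ≪ vol) (hν : ν ≪ vol) (hνμ : ν ≪ μ) :
    ∫ y, (ν.rnDeriv vol y).toReal / (μ.rnDeriv vol y).toReal ∂μ = (ν Set.univ).toReal := by
  set g : α → ℝ := fun y => (ν.rnDeriv vol y).toReal / (μ.rnDeriv vol y).toReal with hg
  have hmeas : Measurable (fun y => (μ.rnDeriv vol y).toNNReal) :=
    (Measure.measurable_rnDeriv _ _).ennreal_toNNReal
  have hcong : vol.withDensity (μ.rnDeriv vol)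
      = vol.withDensity (fun y => ((μ.rnDeriv vol y).toNNReal : ℝ≥0∞)) := by
    apply withDensity_congr_ae
    filter_upwards [Measure.rnDeriv_lt_top μ vol] with y hy
    exact (ENNReal.coe_toNNReal hy.ne).symm
  have hμd : μ = vol.withDensity (fun y => ((μ.rnDeriv vol y).toNNReal : ℝ≥0∞)) :=
    (Measure.withDensity_rnDeriv_eq μ vol hμ).symm.trans hcong
  have h1 : ∫ y, g y ∂μ = ∫ y, ((μ.rnDeriv vol y).toNNReal : ℝ≥0) • g y ∂vol := by
    conv_lhs => rw [hμd]
    exact integral_withDensity_eq_integral_smul hmeas g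
  rw [h1]
  have h2 : (fun y => ((μ.rnDeriv vol y).toNNReal : ℝ≥0) • g y)
      =ᵐ[vol] fun y => (ν.rnDeriv vol y).toReal := by
    filter_upwards [Measure.rnDeriv_mul_rnDeriv hνμ (κ := vol),
      Measure.rnDeriv_lt_top ν vol, Measure.rnDeriv_lt_top μ vol] with y hy hν' hμ'
    simp only [hg, NNReal.smul_def, ENNReal.coe_toNNReal_eq_toReal]
    rcases eq_or_ne (μ.rnDeriv vol y) 0 with h0 | h0
    · have : ν.rnDeriv vol y = 0 := by
        rw [← hy]; simp [h0]
      simp [h0, this]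
    · rw [smul_eq_mul, mul_div_cancel₀]
      exact fun h => h0 (by simpa [ENNReal.toReal_eq_zero_iff, hμ'.ne] using h)
  rw [integral_congr_ae h2, Measure.integral_toReal_rnDeriv hν]
  rfl

/-- Lemma B.1: Let χ = ρ' - ρ be the difference of two probability
densities on ℝⁿ, f : ℝⁿ → ℝᵐ measurable, and let Aρ(x) (resp. Aρ'(x)) be the density of
the pushforward f_#ρ (resp. f_#ρ') evaluated at f(x), with Aρ positive and Aχ = Aρ' - Aρ.
Then, under integrability and differentiation-under-the-integral hypotheses,
d/dε[ -∫ (ρ + εχ) log(Aρ + εAχ) ]|_{ε=0} = -∫ χ log Aρ; i.e. the first variation of the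
marginal entropy functional H_m at ρ is x ↦ -log Aρ(x). -/
theorem first_variation_marginal_entropy
    {n m : ℕ} (ρd ρd' : (Fin n → ℝ) → ℝ)
    (hρ_meas : Measurable ρd) (hρ'_meas : Measurable ρd')
    (hρ_nonneg : ∀ x, 0 ≤ ρd x) (hρ'_nonneg : ∀ x, 0 ≤ ρd' x)
    (hρ_int : ∫ x, ρd x = 1) (hρ'_int : ∫ x, ρd' x = 1)
    (f : (Fin n → ℝ) → (Fin m → ℝ)) (hf : Measurable f)
    (χ Aρ Aρ' Aχ : (Fin n → ℝ) → ℝ)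
    (hχ : χ = fun x => ρd' x - ρd x)
    (hAρ : Aρ = fun x =>
      ((Measure.map f ((volume : Measure (Fin n → ℝ)).withDensity
        (fun x => ENNReal.ofReal (ρd x)))).rnDeriv volume (f x)).toReal)
    (hAρ' : Aρ' = fun x =>
      ((Measure.map f ((volume : Measure (Fin n → ℝ)).withDensity
        (fun x => ENNReal.ofReal (ρd' x)))).rnDeriv volume (f x)).toReal)
    (hAχ : Aχ = fun x => Aρ' x - Aρ x)
    (hac : Measure.map f ((volume : Measure (Fin n → ℝ)).withDensity
        (fun x => ENNReal.ofReal (ρd x))) ≪ (volume : Measure (Fin m → ℝ)))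
    (hac' : Measure.map f ((volume : Measure (Fin n → ℝ)).withDensity
        (fun x => ENNReal.ofReal (ρd' x))) ≪ (volume : Measure (Fin m → ℝ)))
    (hacpush : Measure.map f ((volume : Measure (Fin n → ℝ)).withDensity
        (fun x => ENNReal.ofReal (ρd' x)))
      ≪ Measure.map f ((volume : Measure (Fin n → ℝ)).withDensity
        (fun x => ENNReal.ofReal (ρd x))))
    (hApos : ∀ x, 0 < Aρ x)
    (hint1 : Integrable (fun x => χ x * Real.log (Aρ x)) (volume : Measure (Fin n → ℝ)))
    (hint2 : Integrable (fun x => ρd x * (Aχ x / Aρ x)) (volume : Measure (Fin n → ℝ)))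
    (hswap : HasDerivAt
      (fun ε => ∫ x, (ρd x + ε * χ x) * Real.log (Aρ x + ε * Aχ x))
      (∫ x, deriv (fun ε => (ρd x + ε * χ x) * Real.log (Aρ x + ε * Aχ x)) 0) 0) :
    HasDerivAt
      (fun ε => -∫ x, (ρd x + ε * χ x) * Real.log (Aρ x + ε * Aχ x))
      (-∫ x, χ x * Real.log (Aρ x)) 0 := by
  -- basic integrability
  have hρI : Integrable ρd (volume : Measure (Fin n → ℝ)) := by
    by_contra h
    rw [integral_undef h] at hρ_int; norm_num at hρ_int
  have hρ'I : Integrable ρd' (volume : Measure (Fin n → ℝ)) := by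
    by_contra h
    rw [integral_undef h] at hρ'_int; norm_num at hρ'_int
  set μn := (volume : Measure (Fin n → ℝ)).withDensity (fun x => ENNReal.ofReal (ρd x)) with hμn
  set νn := (volume : Measure (Fin n → ℝ)).withDensity (fun x => ENNReal.ofReal (ρd' x)) with hνn
  have hlρ : ∫⁻ x, ENNReal.ofReal (ρd x) ∂(volume : Measure (Fin n → ℝ)) = 1 := by
    rw [← ofReal_integral_eq_lintegral_ofReal hρI (Filter.Eventually.of_forall hρ_nonneg), hρ_int]
    simp
  have hlρ' : ∫⁻ x, ENNReal.ofReal (ρd' x) ∂(volume : Measure (Fin n → ℝ)) = 1 := by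
    rw [← ofReal_integral_eq_lintegral_ofReal hρ'I (Filter.Eventually.of_forall hρ'_nonneg),
      hρ'_int]
    simp
  haveI : IsFiniteMeasure μn := isFiniteMeasure_withDensity (by rw [hlρ]; exact one_ne_top)
  haveI : IsFiniteMeasure νn := isFiniteMeasure_withDensity (by rw [hlρ']; exact one_ne_top)
  -- the key integral identity: ∫ ρ · (Aρ'/Aρ) = 1
  have hkey : ∫ x, ρd x * (Aρ' x / Aρ x) = 1 := by
    set g : (Fin m → ℝ) → ℝ := fun y =>
      ((Measure.map f νn).rnDeriv volume y).toReal
        / ((Measure.map f μn).rnDeriv volume y).toReal with hg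
    have hgmeas : Measurable g :=
      (Measure.measurable_rnDeriv _ _).ennreal_toReal.div
        (Measure.measurable_rnDeriv _ _).ennreal_toReal
    have e0 : (fun x => ρd x * (Aρ' x / Aρ x)) = fun x => ((ρd x).toNNReal : ℝ≥0) • g (f x) := by
      funext x
      simp [hg, hAρ, hAρ', NNReal.smul_def, Real.coe_toNNReal _ (hρ_nonneg x)]
    have e1 : μn = (volume : Measure (Fin n → ℝ)).withDensity
        (fun x => ((ρd x).toNNReal : ℝ≥0∞)) := rfl
    calc ∫ x, ρd x * (Aρ' x / Aρ x)
        = ∫ x, ((ρd x).toNNReal : ℝ≥0) • g (f x) ∂(volume : Measure (Fin n → ℝ)) := by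
          rw [e0]
      _ = ∫ x, g (f x) ∂μn := by
          rw [e1]
          exact (integral_withDensity_eq_integral_smul hρ_meas.real_toNNReal
            (fun x => g (f x))).symm
      _ = ∫ y, g y ∂(Measure.map f μn) :=
          (integral_map hf.aemeasurable hgmeas.aestronglyMeasurable).symm
      _ = ((Measure.map f νn) Set.univ).toReal :=
          key_integral volume (Measure.map f μn) (Measure.map f νn) hac hac' hacpush
      _ = 1 := by
          rw [Measure.map_apply hf MeasurableSet.univ, Set.preimage_univ, hνn,
            withDensity_apply _ MeasurableSet.univ, setLIntegral_univ, hlρ']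
          simp
  -- ∫ ρ · (Aχ/Aρ) = 0
  have hptw : (fun x => ρd x * (Aχ x / Aρ x))
      = fun x => ρd x * (Aρ' x / Aρ x) - ρd x := by
    funext x
    rw [hAχ]
    have h0 : Aρ x ≠ 0 := (hApos x).ne'
    field_simp
  have hint3 : Integrable (fun x => ρd x * (Aρ' x / Aρ x)) (volume : Measure (Fin n → ℝ)) := by
    have : (fun x => ρd x * (Aρ' x / Aρ x))
        = (fun x => ρd x * (Aχ x / Aρ x)) + ρd := by
      funext x
      simp only [Pi.add_apply]
      rw [hAχ]
      have h0 : Aρ x ≠ 0 := (hApos x).ne'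
      field_simp
      ring
    rw [this]; exact hint2.add hρI
  have hzero : ∫ x, ρd x * (Aχ x / Aρ x) = 0 := by
    rw [hptw, integral_sub hint3 hρI, hkey, hρ_int, sub_self]
  -- pointwise derivative
  have hderiv : ∀ x, deriv (fun ε => (ρd x + ε * χ x) * Real.log (Aρ x + ε * Aχ x)) 0
      = χ x * Real.log (Aρ x) + ρd x * (Aχ x / Aρ x) := by
    intro x
    have ha : HasDerivAt (fun ε : ℝ => ρd x + ε * χ x) (χ x) 0 := by
      simpa using ((hasDerivAt_id (0 : ℝ)).mul_const (χ x)).const_add (ρd x)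
    have hb : HasDerivAt (fun ε : ℝ => Aρ x + ε * Aχ x) (Aχ x) 0 := by
      simpa using ((hasDerivAt_id (0 : ℝ)).mul_const (Aχ x)).const_add (Aρ x)
    have hlog : HasDerivAt (fun ε : ℝ => Real.log (Aρ x + ε * Aχ x)) (Aχ x / Aρ x) 0 := by
      have h0 : Aρ x + 0 * Aχ x ≠ 0 := by simpa using (hApos x).ne'
      have := (Real.hasDerivAt_log h0).comp 0 hb
      simpa [div_eq_mul_inv, mul_comm, Function.comp_def] using this
    have hd := ha.mul hlog
    simp only [zero_mul, add_zero] at hd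
    exact hd.deriv
  rw [show (∫ x, χ x * Real.log (Aρ x))
      = ∫ x, deriv (fun ε => (ρd x + ε * χ x) * Real.log (Aρ x + ε * Aχ x)) 0 by
    simp_rw [hderiv]
    rw [integral_add hint1 hint2, hzero, add_zero]]
  exact hswap.neg
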